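/- Let n be a positive integer and let y₁, y₂, y₃, y₄ be pairwise distinct elements of ZMod n. Set z₁ := min(d(y₁,y₂), d(y₂,y₁)) and z₃ := min(d(y₃,y₄), d(y₄,y₃)). Suppose that either (d(y₃,y₁) ≤ d(y₃,y₄) and d(y₄,y₂) ≤ d(y₄,y₃)) or (d(y₃,y₂) ≤ d(y₃,y₄) and d(y₄,y₁) ≤ d(y₄,y₃)) (i.e., y₁ and y₂ lie on different arcs determined by y₃ and y₄). Then 4·(f(y₁,y₃) + f(y₁,y₄) + f(y₂,y₃) + f(y₂,y₄)) ≥ 16·⌊n/2⌋·⌊(n−1)/2⌋ + z₁² + (n−z₁)² + z₃² + (n−z₃)² − 2·Δ_n. -/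

import Mathlib

/-- `C2 x` is the binomial-type expression `x(x-1)/2`. -/
def C2 (x : ℤ) : ℤ := x * (x - 1) / 2

/-- `dz x y` is the least nonnegative residue of `y - x` modulo `n`. -/
def dz {n : ℕ} (x y : ZMod n) : ℕ := (y - x).val

/-- `fz x y = C(d(x,y),2) + C(n - d(x,y),2)` for `x y : ZMod n`. -/
def fz {n : ℕ} (x y : ZMod n) : ℤ := C2 (dz x y) + C2 ((n : ℤ) - dz x y)

/-- `Δ k = 1` if `k` is odd and `0` if `k` is even. -/
def Δ (k : ℕ) : ℤ := if Odd k then 1 else 0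

/-! Measure positions from `y₃` and put `a = d(y₃,y₁)`, `b = d(y₃,y₄)`, `c = d(y₄,y₂)`. Under the
arc hypothesis the points lie in the cyclic order `y₃, y₁, y₄, y₂`, so every distance occurring in
the statement is one of `a, b - a, c, b + c, b - a + c` or its complement to `n`. As
`2 f = d² + (n - d)² - n`, the claim becomes a quadratic inequality in `a, b, c`, and twice the
difference of its two sides is `(n - 2b)² + (2a + 2c - n)² + 2 (2a - b)² + 2 (2c + b - n)²`.
This is at least `4 Δ_n`: for odd `n` the first two bases are odd, and the last two add up to an
odd number. -/

lemma two_mul_C2 (x : ℤ) : 2 * C2 x = x * (x - 1) :=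
  Int.two_mul_ediv_two_of_even (by simpa [mul_comm] using Int.even_mul_pred_self x)

lemma two_mul_fz {n : ℕ} (x y : ZMod n) :
    2 * fz x y = (dz x y : ℤ) ^ 2 + ((n : ℤ) - dz x y) ^ 2 - n := by
  rw [fz, mul_add, two_mul_C2, two_mul_C2]
  ring

lemma four_mul_div_two_mul_pred_div_two (n : ℕ) :
    4 * (((n / 2 : ℕ) : ℤ) * (((n - 1) / 2 : ℕ) : ℤ)) = ((n : ℤ) - 1) ^ 2 - 1 + Δ n := by
  rcases Nat.even_or_odd' n with ⟨m, rfl | rfl⟩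
  · rcases m with _ | m
    · simp [Δ]
    · have hΔ : Δ (2 * (m + 1)) = 0 := by simp [Δ, Nat.not_odd_iff_even]
      rw [hΔ, show 2 * (m + 1) / 2 = m + 1 by omega, show (2 * (m + 1) - 1) / 2 = m by omega]
      push_cast
      ring
  · have hΔ : Δ (2 * m + 1) = 1 := by simp [Δ]
    rw [hΔ, show (2 * m + 1) / 2 = m by omega, show (2 * m + 1 - 1) / 2 = m by omega]
    push_cast
    ring

lemma four_mul_Δ_le (n : ℕ) (a b c : ℤ) :
    4 * Δ n ≤ ((n : ℤ) - 2 * b) ^ 2 + (2 * a + 2 * c - n) ^ 2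
      + 2 * ((2 * a - b) ^ 2 + (2 * c + b - n) ^ 2) := by
  unfold Δ
  split_ifs with hodd
  · have hmod : n % 2 = 1 := Nat.odd_iff.mp hodd
    have one_le_sq : ∀ k : ℤ, k ≠ 0 → 1 ≤ k ^ 2 := fun k hk =>
      (one_le_sq_iff_one_le_abs k).mpr (Int.one_le_abs hk)
    have h₁ := one_le_sq ((n : ℤ) - 2 * b) (by omega)
    have h₂ := one_le_sq (2 * a + 2 * c - n) (by omega)
    have h₃ : 1 ≤ (2 * a - b) ^ 2 + (2 * c + b - n) ^ 2 := by
      rcases (by omega : 2 * a - b ≠ 0 ∨ 2 * c + b - n ≠ 0) with h | h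
      · linarith [one_le_sq _ h, sq_nonneg (2 * c + b - n)]
      · linarith [one_le_sq _ h, sq_nonneg (2 * a - b)]
    linarith
  · positivity

lemma arc_inequality_of_positions (n : ℕ) (a b c : ℤ) :
    16 * (((n / 2 : ℕ) : ℤ) * (((n - 1) / 2 : ℕ) : ℤ)) + (b - a + c) ^ 2 + ((n : ℤ) - (b - a + c)) ^ 2
        + b ^ 2 + ((n : ℤ) - b) ^ 2 - 2 * Δ n ≤
      2 * (a ^ 2 + ((n : ℤ) - a) ^ 2 + (b - a) ^ 2 + ((n : ℤ) - (b - a)) ^ 2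
        + (b + c) ^ 2 + ((n : ℤ) - (b + c)) ^ 2 + c ^ 2 + ((n : ℤ) - c) ^ 2) - 8 * n := by
  linarith [four_mul_Δ_le n a b c, four_mul_div_two_mul_pred_div_two n]

section Circle

variable {n : ℕ}

lemma dz_add_dz [NeZero n] {x y : ZMod n} (h : x ≠ y) : dz x y + dz y x = n := by
  have : NeZero (y - x) := ⟨sub_ne_zero.mpr h.symm⟩
  rw [dz, dz, ← neg_sub y x, ZMod.val_neg_of_ne_zero]
  have := ZMod.val_lt (y - x)
  omega

lemma cast_dz_comm [NeZero n] {x y : ZMod n} (h : x ≠ y) : (dz y x : ℤ) = n - dz x y := by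
  have := dz_add_dz h
  omega

lemma fz_comm [NeZero n] (x y : ZMod n) : fz x y = fz y x := by
  rcases eq_or_ne x y with rfl | h
  · rfl
  · rw [fz, fz, cast_dz_comm h, sub_sub_cancel, add_comm]

lemma sq_add_sq_sub_dz_comm [NeZero n] (x y : ZMod n) :
    (dz y x : ℤ) ^ 2 + ((n : ℤ) - dz y x) ^ 2 = (dz x y : ℤ) ^ 2 + ((n : ℤ) - dz x y) ^ 2 := by
  rcases eq_or_ne x y with rfl | h
  · rfl
  · rw [cast_dz_comm h]
    ring

lemma dz_injective [NeZero n] (x : ZMod n) : Function.Injective (dz x) :=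
  fun _ _ h => sub_left_injective (ZMod.val_injective n h)

lemma dz_eq_sub [NeZero n] {x y z : ZMod n} (h : dz z x ≤ dz z y) : dz x y = dz z y - dz z x := by
  rw [dz, dz, dz, ← ZMod.val_sub h, sub_sub_sub_cancel_right]

lemma dz_eq_add {x y z : ZMod n} (h : dz x y + dz y z < n) : dz x z = dz x y + dz y z := by
  rw [dz, dz, dz, ← ZMod.val_add_of_lt h, sub_add_sub_cancel']

lemma sq_add_sq_sub_min_dz [NeZero n] (x y : ZMod n) :
    ((min (dz x y) (dz y x) : ℕ) : ℤ) ^ 2 + ((n : ℤ) - (min (dz x y) (dz y x) : ℕ)) ^ 2 =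
      (dz x y : ℤ) ^ 2 + ((n : ℤ) - dz x y) ^ 2 := by
  rcases min_cases (dz x y) (dz y x) with ⟨h, -⟩ | ⟨h, -⟩ <;> rw [h]
  exact sq_add_sq_sub_dz_comm x y

lemma arc_inequality [NeZero n] {y₁ y₂ y₃ y₄ : ZMod n}
    (h23 : y₂ ≠ y₃) (h34 : y₃ ≠ y₄)
    (ha : dz y₃ y₁ ≤ dz y₃ y₄) (hc : dz y₄ y₂ ≤ dz y₄ y₃) :
    16 * (((n / 2 : ℕ) : ℤ) * (((n - 1) / 2 : ℕ) : ℤ))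
        + (dz y₁ y₂ : ℤ) ^ 2 + ((n : ℤ) - dz y₁ y₂) ^ 2
        + (dz y₃ y₄ : ℤ) ^ 2 + ((n : ℤ) - dz y₃ y₄) ^ 2 - 2 * Δ n ≤
      4 * (fz y₁ y₃ + fz y₁ y₄ + fz y₂ y₃ + fz y₂ y₄) := by
  set a := dz y₃ y₁
  set b := dz y₃ y₄
  set c := dz y₄ y₂
  have hbc : b + c < n := by
    have := lt_of_le_of_ne hc ((dz_injective y₄).ne h23)
    have := dz_add_dz h34
    omega
  have h14 : dz y₁ y₄ = b - a := dz_eq_sub ha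
  have h32 : dz y₃ y₂ = b + c := dz_eq_add hbc
  have h12 : dz y₁ y₂ = b - a + c := by
    rw [dz_eq_add (y := y₄)] <;> omega
  have f13 := two_mul_fz y₃ y₁
  have f14 := two_mul_fz y₁ y₄
  have f23 := two_mul_fz y₃ y₂
  have f24 := two_mul_fz y₄ y₂
  rw [h14, Nat.cast_sub ha] at f14
  rw [h32, Nat.cast_add] at f23
  rw [h12, Nat.cast_add, Nat.cast_sub ha]
  rw [fz_comm y₁ y₃, fz_comm y₂ y₃, fz_comm y₂ y₄]
  linarith [arc_inequality_of_positions n a b c]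

end Circle

theorem stmt_11_general (n : ℕ) (hn : 0 < n) (y₁ y₂ y₃ y₄ : ZMod n)
    (h13 : y₁ ≠ y₃) (h23 : y₂ ≠ y₃) (h34 : y₃ ≠ y₄)
    (z₁ z₃ : ℕ) (hz₁ : z₁ = min (dz y₁ y₂) (dz y₂ y₁))
    (hz₃ : z₃ = min (dz y₃ y₄) (dz y₄ y₃))
    (harc : (dz y₃ y₁ ≤ dz y₃ y₄ ∧ dz y₄ y₂ ≤ dz y₄ y₃) ∨
            (dz y₃ y₂ ≤ dz y₃ y₄ ∧ dz y₄ y₁ ≤ dz y₄ y₃)) :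
    16 * (((n / 2 : ℕ) : ℤ) * (((n - 1) / 2 : ℕ) : ℤ)) + (z₁ : ℤ) ^ 2 + ((n : ℤ) - z₁) ^ 2
        + (z₃ : ℤ) ^ 2 + ((n : ℤ) - z₃) ^ 2 - 2 * Δ n ≤
      4 * (fz y₁ y₃ + fz y₁ y₄ + fz y₂ y₃ + fz y₂ y₄) := by
  have : NeZero n := ⟨hn.ne'⟩
  have hz₁' := hz₁ ▸ sq_add_sq_sub_min_dz y₁ y₂
  have hz₃' := hz₃ ▸ sq_add_sq_sub_min_dz y₃ y₄
  rcases harc with ⟨ha, hc⟩ | ⟨ha, hc⟩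
  · linarith [arc_inequality h23 h34 ha hc]
  · linarith [arc_inequality h13 h34 ha hc, sq_add_sq_sub_dz_comm y₁ y₂]

theorem stmt_11 (n : ℕ) (hn : 0 < n) (y₁ y₂ y₃ y₄ : ZMod n)
    (h12 : y₁ ≠ y₂) (h13 : y₁ ≠ y₃) (h14 : y₁ ≠ y₄)
    (h23 : y₂ ≠ y₃) (h24 : y₂ ≠ y₄) (h34 : y₃ ≠ y₄)
    (z₁ z₃ : ℕ) (hz₁ : z₁ = min (dz y₁ y₂) (dz y₂ y₁))
    (hz₃ : z₃ = min (dz y₃ y₄) (dz y₄ y₃))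
    (harc : (dz y₃ y₁ ≤ dz y₃ y₄ ∧ dz y₄ y₂ ≤ dz y₄ y₃) ∨
            (dz y₃ y₂ ≤ dz y₃ y₄ ∧ dz y₄ y₁ ≤ dz y₄ y₃)) :
    16 * (((n / 2 : ℕ) : ℤ) * (((n - 1) / 2 : ℕ) : ℤ)) + (z₁ : ℤ) ^ 2 + ((n : ℤ) - z₁) ^ 2
        + (z₃ : ℤ) ^ 2 + ((n : ℤ) - z₃) ^ 2 - 2 * Δ n ≤
      4 * (fz y₁ y₃ + fz y₁ y₄ + fz y₂ y₃ + fz y₂ y₄) :=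
  stmt_11_general n hn y₁ y₂ y₃ y₄ h13 h23 h34 z₁ z₃ hz₁ hz₃ harc
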